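/- Let p > 1 be real. For real parameters (β, c) with c² < 1 and β < 2√(1−c²), define m(β,c) = inf { I(u;β,c) / K(u)^{2/(p+1)} }, the infimum taken over all twice continuously differentiable u : ℝ → ℝ with u, u', u'' square-integrable and K(u) > 0, where I(u;β,c) = ∫_ℝ (u''² − βu'² + (1−c²)u²) dx and K(u) = ∫_ℝ |u|^{p+1} dx. Then for every c with c² < 1, m(0,c) = (1−c²)^{(3p+5)/(4(p+1))} · m(0,0). -/

import Mathlib

open MeasureTheory Pointwise

/-- The quadratic functional `I(u;β,c) = ∫ (u''² − βu'² + (1−c²)u²)`. -/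
noncomputable def Ifun (β c : ℝ) (u : ℝ → ℝ) : ℝ :=
  ∫ x : ℝ, ((iteratedDeriv 2 u x) ^ 2 - β * (deriv u x) ^ 2 + (1 - c ^ 2) * (u x) ^ 2)

/-- The nonlinear functional `K(u) = ∫ |u|^{p+1}`. -/
noncomputable def Kfun (p : ℝ) (u : ℝ → ℝ) : ℝ :=
  ∫ x : ℝ, |u x| ^ (p + 1)

/-- Admissible functions: twice continuously differentiable with `u, u', u''`
square-integrable. -/
def Adm (u : ℝ → ℝ) : Prop :=
  ContDiff ℝ 2 u ∧ Integrable (fun x => (u x) ^ 2) ∧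
    Integrable (fun x => (deriv u x) ^ 2) ∧
    Integrable (fun x => (iteratedDeriv 2 u x) ^ 2)

/-- The ground-state variational constant
`m(β,c) = inf { I(u;β,c)/K(u)^{2/(p+1)} : u admissible, K(u) > 0 }`. -/
noncomputable def mconst (p β c : ℝ) : ℝ :=
  sInf {y : ℝ | ∃ u : ℝ → ℝ, Adm u ∧ 0 < Kfun p u ∧
    y = Ifun β c u / (Kfun p u) ^ (2 / (p + 1))}

/- ### Auxiliary lemmas -/

lemma iteratedDeriv_two' (f : ℝ → ℝ) : iteratedDeriv 2 f = deriv (deriv f) := by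
  rw [show (2:ℕ) = 1+1 from rfl, iteratedDeriv_succ, iteratedDeriv_one]

lemma deriv_scl {g : ℝ → ℝ} (hg : Differentiable ℝ g) (μ : ℝ) :
    deriv (fun x => g (μ * x)) = fun x => μ * deriv g (μ * x) := by
  funext x
  have h1 : HasDerivAt g (deriv g (μ * x)) (μ * x) := (hg (μ * x)).hasDerivAt
  have h2 : HasDerivAt (fun y : ℝ => μ * y) μ x := by
    simpa using (hasDerivAt_id x).const_mul μ
  exact (h1.comp x h2).deriv.trans (mul_comm _ _)

lemma deriv_of_contDiff2 {u : ℝ → ℝ} (hu : ContDiff ℝ 2 u) : ContDiff ℝ 1 (deriv u) := by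
  have : ContDiff ℝ ((1 : ℕ) + 1) u := by exact_mod_cast hu
  exact (contDiff_succ_iff_deriv.mp this).2.2

lemma iter2_scl {u : ℝ → ℝ} (hu : ContDiff ℝ 2 u) (μ : ℝ) :
    iteratedDeriv 2 (fun x => u (μ * x)) = fun x => μ ^ 2 * iteratedDeriv 2 u (μ * x) := by
  have hdu : ContDiff ℝ 1 (deriv u) := deriv_of_contDiff2 hu
  rw [iteratedDeriv_two', iteratedDeriv_two', deriv_scl (hu.differentiable two_ne_zero) μ]
  funext x
  have h1 : HasDerivAt (deriv u) (deriv (deriv u) (μ * x)) (μ * x) :=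
    ((hdu.differentiable one_ne_zero) (μ * x)).hasDerivAt
  have h2 : HasDerivAt (fun y : ℝ => μ * y) μ x := by
    simpa using (hasDerivAt_id x).const_mul μ
  have h3 : HasDerivAt (fun y => deriv u (μ * y)) (deriv (deriv u) (μ * x) * μ) x :=
    h1.comp x h2
  have h4 := (h3.const_mul μ).deriv
  rw [h4]; ring

lemma contDiff_scl {u : ℝ → ℝ} (hu : ContDiff ℝ 2 u) (μ : ℝ) :
    ContDiff ℝ 2 fun x => u (μ * x) :=
  hu.comp (contDiff_const.mul contDiff_id)

lemma integral_scl {g : ℝ → ℝ} {μ : ℝ} (hμ : 0 < μ) :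
    (∫ x : ℝ, g (μ * x)) = μ⁻¹ * ∫ x : ℝ, g x := by
  rw [MeasureTheory.Measure.integral_comp_mul_left g μ, abs_of_pos (inv_pos.mpr hμ), smul_eq_mul]

lemma adm_scl {u : ℝ → ℝ} (hu : Adm u) {μ : ℝ} (hμ : 0 < μ) :
    Adm (fun x => u (μ * x)) := by
  obtain ⟨h2, hI0, hI1, hI2⟩ := hu
  refine ⟨contDiff_scl h2 μ, ?_, ?_, ?_⟩
  · exact hI0.comp_mul_left' hμ.ne'
  · rw [deriv_scl (h2.differentiable two_ne_zero) μ]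
    have := (hI1.comp_mul_left' (g := fun x => (deriv u x) ^ 2) hμ.ne').const_mul (μ ^ 2)
    refine this.congr ?_
    filter_upwards with x; ring
  · rw [iter2_scl h2 μ]
    have := (hI2.comp_mul_left' (g := fun x => (iteratedDeriv 2 u x) ^ 2) hμ.ne').const_mul
      ((μ ^ 2) ^ 2)
    refine this.congr ?_
    filter_upwards with x; ring

lemma Kfun_scl (p : ℝ) {u : ℝ → ℝ} {μ : ℝ} (hμ : 0 < μ) :
    Kfun p (fun x => u (μ * x)) = μ⁻¹ * Kfun p u :=
  integral_scl (g := fun x => |u x| ^ (p + 1)) hμ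

lemma Ifun_split (c : ℝ) {u : ℝ → ℝ} (hu : Adm u) :
    Ifun 0 c u = (∫ x : ℝ, (iteratedDeriv 2 u x) ^ 2) + (1 - c ^ 2) * ∫ x : ℝ, (u x) ^ 2 := by
  unfold Ifun
  simp only [zero_mul, sub_zero]
  rw [integral_add hu.2.2.2 (hu.2.1.const_mul _), integral_const_mul]

lemma Ifun_scl (c : ℝ) {v : ℝ → ℝ} (hv : Adm v) {ν : ℝ} (hν : 0 < ν)
    (h4 : ν ^ 4 = 1 - c ^ 2) :
    Ifun 0 c (fun x => v (ν * x)) = ν ^ 3 * Ifun 0 0 v := by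
  have hA := adm_scl hv hν
  rw [Ifun_split c hA, Ifun_split 0 hv, iter2_scl hv.1 ν]
  have e1 : (∫ x : ℝ, (ν ^ 2 * iteratedDeriv 2 v (ν * x)) ^ 2)
      = (ν ^ 2) ^ 2 * (ν⁻¹ * ∫ x : ℝ, (iteratedDeriv 2 v x) ^ 2) := by
    simp_rw [mul_pow]
    rw [integral_const_mul, integral_scl (g := fun x => (iteratedDeriv 2 v x) ^ 2) hν]
  have e2 : (∫ x : ℝ, (v (ν * x)) ^ 2) = ν⁻¹ * ∫ x : ℝ, (v x) ^ 2 :=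
    integral_scl (g := fun x => (v x) ^ 2) hν
  rw [e1, e2, ← h4]
  have hν' : ν ≠ 0 := hν.ne'
  field_simp
  ring

lemma ratio_scl (p c : ℝ) (hp : 1 < p) (hc : c ^ 2 < 1) {v : ℝ → ℝ} (hv : Adm v)
    (hK : 0 < Kfun p v) :
    Ifun 0 c (fun x => v ((1 - c ^ 2) ^ ((1:ℝ)/4) * x)) /
        (Kfun p (fun x => v ((1 - c ^ 2) ^ ((1:ℝ)/4) * x))) ^ (2 / (p + 1))
      = (1 - c ^ 2) ^ ((3 * p + 5) / (4 * (p + 1)))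
          * (Ifun 0 0 v / (Kfun p v) ^ (2 / (p + 1))) := by
  have hε : (0:ℝ) < 1 - c ^ 2 := by linarith
  set ε := 1 - c ^ 2 with hεdef
  set ν : ℝ := ε ^ ((1:ℝ)/4) with hνdef
  have hν : 0 < ν := Real.rpow_pos_of_pos hε _
  have h4 : ν ^ 4 = ε := by
    rw [hνdef, ← Real.rpow_natCast (ε ^ ((1:ℝ)/4)) 4, ← Real.rpow_mul hε.le]
    norm_num
  set q : ℝ := 2 / (p + 1) with hqdef
  have hp1 : p + 1 ≠ 0 := by linarith
  rw [Ifun_scl c hv hν h4, Kfun_scl p hν,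
    Real.mul_rpow (inv_pos.mpr hν).le hK.le, Real.inv_rpow hν.le]
  have hKq : (0:ℝ) < Kfun p v ^ q := Real.rpow_pos_of_pos hK q
  have hνq : (0:ℝ) < ν ^ q := Real.rpow_pos_of_pos hν q
  have key : ν ^ 3 * Ifun 0 0 v / ((ν ^ q)⁻¹ * Kfun p v ^ q)
      = (ν ^ 3 * ν ^ q) * (Ifun 0 0 v / Kfun p v ^ q) := by
    field_simp
  rw [key]
  congr 1
  rw [← Real.rpow_natCast ν 3, ← Real.rpow_add hν, hνdef, ← Real.rpow_mul hε.le]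
  congr 1
  rw [hqdef]
  push_cast
  field_simp
  ring

lemma scl_scl {u : ℝ → ℝ} {ν : ℝ} (hν : ν ≠ 0) :
    (fun x => (fun y => u (ν⁻¹ * y)) (ν * x)) = u := by
  funext x
  show u (ν⁻¹ * (ν * x)) = u x
  rw [inv_mul_cancel_left₀ hν]

/-- The `β = 0` specialization of the scaling identity:
`m(0,c) = (1−c²)^{(3p+5)/(4(p+1))} m(0,0)`. -/
theorem mconst_beta_zero_scaling (p c : ℝ) (hp : 1 < p) (hc : c ^ 2 < 1) :
    mconst p 0 c = (1 - c ^ 2) ^ ((3 * p + 5) / (4 * (p + 1))) * mconst p 0 0 := by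
  have hε : (0:ℝ) < 1 - c ^ 2 := by linarith
  set ε := 1 - c ^ 2 with hεdef
  set θ : ℝ := (3 * p + 5) / (4 * (p + 1)) with hθdef
  set ν : ℝ := ε ^ ((1:ℝ)/4) with hνdef
  have hν : 0 < ν := Real.rpow_pos_of_pos hε _
  have hset : {y : ℝ | ∃ u : ℝ → ℝ, Adm u ∧ 0 < Kfun p u ∧
        y = Ifun 0 c u / (Kfun p u) ^ (2 / (p + 1))}
      = ε ^ θ • {y : ℝ | ∃ u : ℝ → ℝ, Adm u ∧ 0 < Kfun p u ∧
        y = Ifun 0 0 u / (Kfun p u) ^ (2 / (p + 1))} := by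
    ext y
    simp only [Set.mem_smul_set, Set.mem_setOf_eq, smul_eq_mul]
    constructor
    · rintro ⟨u, hu, hK, rfl⟩
      refine ⟨Ifun 0 0 (fun x => u (ν⁻¹ * x)) /
          (Kfun p (fun x => u (ν⁻¹ * x))) ^ (2 / (p + 1)),
        ⟨fun x => u (ν⁻¹ * x), adm_scl hu (inv_pos.mpr hν), ?_, rfl⟩, ?_⟩
      · rw [Kfun_scl p (inv_pos.mpr hν), inv_inv]
        positivity
      · have := ratio_scl p c hp hc (adm_scl hu (inv_pos.mpr hν))
          (by rw [Kfun_scl p (inv_pos.mpr hν), inv_inv]; positivity)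
        rw [scl_scl hν.ne'] at this
        rw [← this]
    · rintro ⟨z, ⟨v, hv, hK, rfl⟩, rfl⟩
      exact ⟨fun x => v (ν * x), adm_scl hv hν,
        by rw [Kfun_scl p hν]; positivity,
        (ratio_scl p c hp hc hv hK).symm⟩
  unfold mconst
  rw [hset, Real.sInf_smul_of_nonneg (Real.rpow_nonneg hε.le θ), smul_eq_mul]
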